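/- arXiv:0808.3732 — 7 statements merged into one kernel-verified Lean document; each statement's English description precedes it below -/
import Mathlib

section
/- For all f : {0,1} → ℝ one has R(Pf) = P(R'f); equivalently, the matrix identity ∑_{x'∈S₁} R(x,x')·p(x',y) = ∑_{y'∈{0,1}} p(x,y')·R'(y',y) holds for all x ∈ S₁ and y ∈ {0,1}. -/
/-- The function `f(r) := γ − √(γ² − 1/2)` with `γ := (1/4)(3 + r/2)`. -/
noncomputable def fpaper (r : ℝ) : ℝ :=
  (1/4) * (3 + r/2) - Real.sqrt (((1/4) * (3 + r/2))^2 - 1/2)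

/-- The kernel `p : S₁ × {0,1} → [0,1]`: `p((0,0),·) = (1,0)`,
`p((0,1),·) = p((1,0),·) = (ξ, 1−ξ)`, `p((1,1),·) = (0,1)`.
A configuration `x ∈ S₁` is a pair `(x(0), x(1))` of Booleans; `true` = infected. -/
noncomputable def pker (ξ : ℝ) (x : Bool × Bool) (y : Bool) : ℝ :=
  if x = (false, false) then (if y = false then 1 else 0)
  else if x = (true, true) then (if y = true then 1 else 0)
  else (if y = false then ξ else 1 - ξ)

/-- The generator `R` of the `(δ,α₁)`-contact process on `S₁ = {0,1}^{{0,1}}`: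
`Rf(x) = δ·∑ᵢ 1{x(i)=1}(f(x−δᵢ)−f(x)) + (α₁/2)·∑_{i≠i'} 1{x(i)=0,x(i')=1}(f(x+δᵢ)−f(x))`. -/
noncomputable def Rop (δ α₁ : ℝ) (f : Bool × Bool → ℝ) (x : Bool × Bool) : ℝ :=
  δ * ((if x.1 = true then f (false, x.2) - f x else 0)
      + (if x.2 = true then f (x.1, false) - f x else 0))
  + (α₁ / 2) * ((if x.1 = false ∧ x.2 = true then f (true, x.2) - f x else 0)
      + (if x.2 = false ∧ x.1 = true then f (x.1, true) - f x else 0))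

/-- The matrix of the generator `R'` on `{0,1}`: jumps from `1` to `0` with rate `δ'`. -/
noncomputable def R'mat (δ' : ℝ) (y y' : Bool) : ℝ :=
  if y = true then (if y' = true then -δ' else δ') else 0

lemma fpaper_quad (r : ℝ) (hr : 0 ≤ r) :
    2 * (fpaper r)^2 - (3 + r/2) * fpaper r + 1 = 0 := by
  have hnn : (0:ℝ) ≤ ((1/4) * (3 + r/2))^2 - 1/2 := by nlinarith
  have hs : Real.sqrt (((1/4) * (3 + r/2))^2 - 1/2) ^ 2
      = ((1/4) * (3 + r/2))^2 - 1/2 := Real.sq_sqrt hnn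
  unfold fpaper
  nlinarith [hs]

/-- One-level intertwining: `R(Pf) = P(R'f)` for all `f : {0,1} → ℝ`, where
`ξ := f(α₁/δ)`, `δ' := 2ξδ`, and `Pf(x) := ∑_y p(x,y)f(y)`. -/
theorem stmt6 (δ α₁ : ℝ) (hδ : 0 < δ) (hα : 0 ≤ α₁) (g : Bool → ℝ) (x : Bool × Bool) :
    Rop δ α₁ (fun x' => ∑ y : Bool, pker (fpaper (α₁/δ)) x' y * g y) x
      = ∑ y' : Bool, pker (fpaper (α₁/δ)) x y' *
          (∑ y : Bool, R'mat (2 * fpaper (α₁/δ) * δ) y' y * g y) := by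
  have hr : 0 ≤ α₁ / δ := div_nonneg hα hδ.le
  have hq := fpaper_quad (α₁/δ) hr
  have hdr : (α₁/δ) * δ = α₁ := div_mul_cancel₀ α₁ hδ.ne'
  have hq' : 2*δ*(fpaper (α₁/δ))^2 - 3*δ*(fpaper (α₁/δ)) - (α₁/2)*(fpaper (α₁/δ)) + δ = 0 := by
    linear_combination δ * hq + ((fpaper (α₁/δ))/2) * hdr
  obtain ⟨a, b⟩ := x
  cases a <;> cases b
  · simp [Rop, pker, R'mat, Fintype.sum_bool]
  · simp [Rop, pker, R'mat, Fintype.sum_bool]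
    linear_combination (g false - g true) * hq'
  · simp [Rop, pker, R'mat, Fintype.sum_bool]
    linear_combination (g false - g true) * hq'
  · simp [Rop, pker, R'mat, Fintype.sum_bool]
    ring
end

section
/- The function v : S₁ → ℝ defined by v(0,0) = 0, v(0,1) = v(1,0) = 1 − ξ, v(1,1) = 1 is an eigenfunction of R with eigenvalue −2δξ, i.e., Rv = −2δξ·v. -/
/-- The function `v : S₁ → ℝ` with `v(0,0) = 0`, `v(0,1) = v(1,0) = 1−ξ`, `v(1,1) = 1`. -/
noncomputable def vfun (ξ : ℝ) (x : Bool × Bool) : ℝ :=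
  if x = (false, false) then 0
  else if x = (true, true) then 1
  else 1 - ξ

/-- `v` is an eigenfunction of `R` with eigenvalue `−2δξ`, where `ξ := f(α₁/δ)`. -/
theorem stmt7 (δ α₁ : ℝ) (hδ : 0 < δ) (hα : 0 ≤ α₁) (x : Bool × Bool) :
    Rop δ α₁ (vfun (fpaper (α₁/δ))) x
      = -(2 * δ * fpaper (α₁/δ)) * vfun (fpaper (α₁/δ)) x := by
  have hr : 0 ≤ α₁ / δ := div_nonneg hα hδ.le
  set r := α₁ / δ with hrdef
  have hα' : α₁ = r * δ := by rw [hrdef, div_mul_cancel₀ _ hδ.ne']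
  have hγ : (0:ℝ) ≤ ((1/4) * (3 + r/2))^2 - 1/2 := by nlinarith
  have hquad : 2 * (fpaper r)^2 - (3 + r/2) * fpaper r + 1 = 0 := by
    have hs := Real.sq_sqrt hγ
    unfold fpaper
    nlinarith [hs]
  rcases x with ⟨a, b⟩
  rcases a <;> rcases b <;>
    simp only [Rop, vfun, hα'] <;> norm_num <;> nlinarith [hquad]
end

section
/- For all x ∈ S₂ and y ∈ S₁ one has ∑_{x'∈S₂} I(x,x')·P(x',y) = ∑_{y'∈S₁} P(x,y')·I'_x(y',y); equivalently, for all f : S₁ → ℝ and x ∈ S₂, I(Pf)(x) = ∑_{y∈S₁} P(x,y)·I'_x f(y). Moreover this holds regardless of how the values of a and b at the unspecified entries are chosen. -/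
/-- `z̄` for `z ∈ S₁`, encoded as a natural number: `00 ↦ 0`, `01, 10 ↦ 1`, `11 ↦ 2`. -/
def barN (z : Bool × Bool) : ℕ := (cond z.1 1 0) + (cond z.2 1 0)

/-- A configuration `x ∈ S₂` is a pair `(x₀, x₁)` of its two columns,
`x₀ = (x(0,0), x(1,0))` and `x₁ = (x(0,1), x(1,1))`.  Coordinate access in a column. -/
def getc (z : Bool × Bool) (i : Bool) : Bool := if i then z.2 else z.1

/-- Flip coordinate `i` of a column to `1` (infected). -/
def setT (z : Bool × Bool) (i : Bool) : Bool × Bool := if i then (z.1, true) else (true, z.2)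

/-- The operator `I` on `ℝ^{S₂}`:
`If(x) = (1/2)·∑_{i,j} 1{x(i,0)=0, x(j,1)=1}·(f(x+δ_{(i,0)})−f(x))`. -/
noncomputable def Iop (f : (Bool × Bool) × (Bool × Bool) → ℝ)
    (x : (Bool × Bool) × (Bool × Bool)) : ℝ :=
  (1/2) * ∑ i : Bool, ∑ j : Bool,
    (if getc x.1 i = false ∧ getc x.2 j = true then f (setT x.1 i, x.2) - f x else 0)

/-- The operator `I'_x` on `ℝ^{S₁}`:
`I'_x f(y) = [a(x̄₀,x̄₁)·1{y=(0,1)} + b(x̄₀,x̄₁)·1{y=(0,0)}]·(f(y+δ₀)−f(y))`. -/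
noncomputable def I'op (a b : ℕ → ℕ → ℝ) (x : (Bool × Bool) × (Bool × Bool))
    (f : Bool × Bool → ℝ) (y : Bool × Bool) : ℝ :=
  ((if y = (false, true) then a (barN x.1) (barN x.2) else 0)
    + (if y = (false, false) then b (barN x.1) (barN x.2) else 0)) * (f (true, y.2) - f y)

/-- The kernel `P(x,y) := p(x₀,y(0))·p(x₁,y(1))` from `S₂` to `S₁`. -/
noncomputable def P2 (ξ : ℝ) (x : (Bool × Bool) × (Bool × Bool)) (y : Bool × Bool) : ℝ :=
  pker ξ x.1 y.1 * pker ξ x.2 y.2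


lemma key (ξ : ℝ) (a b : ℕ → ℕ → ℝ)
    (ha1 : a 0 1 = 1 - ξ) (ha2 : a 0 2 = 2*(1 - ξ))
    (ha3 : a 1 1 = 1/2) (ha4 : a 1 2 = 1)
    (hb1 : b 0 0 = 0) (hb2 : b 0 1 = 1 - ξ)
    (hb3 : b 1 0 = 0) (hb4 : b 1 1 = 1/2)
    (g : Bool × Bool → ℝ) (x : (Bool × Bool) × (Bool × Bool)) :
    Iop (fun x' => ∑ y : Bool × Bool, P2 ξ x' y * g y) x
      = ∑ y : Bool × Bool, P2 ξ x y * I'op a b x g y := by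
  obtain ⟨⟨a0, a1⟩, ⟨b0, b1⟩⟩ := x
  cases a0 <;> cases a1 <;> cases b0 <;> cases b1 <;>
    simp only [Iop, I'op, P2, pker, barN, getc, setT, Fintype.sum_prod_type,
      Fintype.sum_bool] <;>
    norm_num [ha1, ha2, ha3, ha4, hb1, hb2, hb3, hb4] <;> ring

/-- Two-level intertwining: `I(Pf)(x) = ∑_{y∈S₁} P(x,y)·I'_x f(y)` for all `f : S₁ → ℝ`
and `x ∈ S₂`, where `ξ := f(α₁/δ)`, for any choice of `a`, `b` at the unspecified
entries. -/
theorem stmt9 (δ α₁ : ℝ) (hδ : 0 < δ) (hα : 0 ≤ α₁) (a b : ℕ → ℕ → ℝ)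
    (ha1 : a 0 1 = 1 - fpaper (α₁/δ)) (ha2 : a 0 2 = 2*(1 - fpaper (α₁/δ)))
    (ha3 : a 1 1 = 1/2) (ha4 : a 1 2 = 1)
    (hb1 : b 0 0 = 0) (hb2 : b 0 1 = 1 - fpaper (α₁/δ))
    (hb3 : b 1 0 = 0) (hb4 : b 1 1 = 1/2)
    (g : Bool × Bool → ℝ) (x : (Bool × Bool) × (Bool × Bool)) :
    Iop (fun x' => ∑ y : Bool × Bool, P2 (fpaper (α₁/δ)) x' y * g y) x
      = ∑ y : Bool × Bool, P2 (fpaper (α₁/δ)) x y * I'op a b x g y := by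
  exact key _ a b ha1 ha2 ha3 ha4 hb1 hb2 hb3 hb4 g x
end

section
/- For every f : S_{n−1} → ℝ and every x ∈ S_n one has G(Pf)(x) = ∑_{y∈S_{n−1}} P(x,y)·G'_x f(y), where Pf(x) := ∑_{y∈S_{n−1}} P(x,y)f(y). Moreover this holds regardless of how the functions a and b are defined at the unspecified entries. -/
open Finset Function


/-- `|i|` for `i ∈ Ω^k = {0,1}^k`: the least `ℓ` such that `i_m = 0` for all `ℓ ≤ m < k`. -/
def hnorm {k : ℕ} (i : Fin k → Bool) : ℕ :=
  (Finset.univ.filter (fun m => i m = true)).sup (fun m => (m : ℕ) + 1)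

/-- The hierarchical distance `|i − j|` on `Ω^k` (subtraction is componentwise mod 2). -/
def hdist {k : ℕ} (i j : Fin k → Bool) : ℕ := hnorm (fun m => (i m != j m))

/-- For `x ∈ S_n = {0,1}^{Ω^n}` (with `Ω^n = {0,1}^n`, here `n` replaced by `n+1`) and
`i ∈ Ω^n`, the block configuration `x_i := (x(0∘i), x(1∘i)) ∈ {0,1}²`. -/
def xblock {n : ℕ} (x : (Fin (n+1) → Bool) → Bool) (i : Fin n → Bool) : Bool × Bool :=
  (x (Fin.cons false i), x (Fin.cons true i))

/-- The probability kernel `P(x,y) := ∏_{i∈Ω^n} p(x_i, y(i))` from `S_{n+1}` to `S_n`. -/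
noncomputable def Pker {n : ℕ} (ξ : ℝ) (x : (Fin (n+1) → Bool) → Bool)
    (y : (Fin n → Bool) → Bool) : ℝ :=
  ∏ i : Fin n → Bool, pker ξ (xblock x i) (y i)

/-- The generator `G` of the `(δ,α₁,…,α_m)`-contact process on `S_m = {0,1}^{Ω^m}`:
`Gf(x) = δ·∑_i 1{x(i)=1}(f(x−δᵢ)−f(x))
 + ∑_{k=1}^m α_k 2^{−k} ∑_{|i−j|=k} 1{x(i)=0,x(j)=1}(f(x+δᵢ)−f(x))`. -/
noncomputable def Gop {m : ℕ} (δ : ℝ) (α : ℕ → ℝ)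
    (f : ((Fin m → Bool) → Bool) → ℝ) (x : (Fin m → Bool) → Bool) : ℝ :=
  δ * ∑ i : Fin m → Bool,
      (if x i = true then f (Function.update x i false) - f x else 0)
  + ∑ k ∈ Finset.Icc 1 m, α k * ((2:ℝ)^k)⁻¹ *
      ∑ i : Fin m → Bool, ∑ j : Fin m → Bool,
        (if hdist i j = k ∧ x i = false ∧ x j = true
          then f (Function.update x i true) - f x else 0)

/-- The generator `G'_x` on `S_n`:
`G'_x f(y) = δ'·∑_i 1{y(i)=1}(f(y−δᵢ)−f(y))
 + ∑_{k=1}^{n} α_{k+1} 2^{−k} ∑_{|i−j|=k}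
   [a(x̄_i,x̄_j)·1{y(i)=0,y(j)=1} + b(x̄_i,x̄_j)·1{y(i)=0,y(j)=0}]·(f(y+δᵢ)−f(y))`. -/
noncomputable def G'op {n : ℕ} (δ' : ℝ) (α : ℕ → ℝ) (a b : ℕ → ℕ → ℝ)
    (x : (Fin (n+1) → Bool) → Bool)
    (f : ((Fin n → Bool) → Bool) → ℝ) (y : (Fin n → Bool) → Bool) : ℝ :=
  δ' * ∑ i : Fin n → Bool,
      (if y i = true then f (Function.update y i false) - f y else 0)
  + ∑ k ∈ Finset.Icc 1 n, α (k+1) * ((2:ℝ)^k)⁻¹ *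
      ∑ i : Fin n → Bool, ∑ j : Fin n → Bool,
        (if hdist i j = k then
          ((if y i = false ∧ y j = true
              then a (barN (xblock x i)) (barN (xblock x j)) else 0)
            + (if y i = false ∧ y j = false
              then b (barN (xblock x i)) (barN (xblock x j)) else 0))
          * (f (Function.update y i true) - f y)
        else 0)

/-! ### helper lemmas -/

lemma pker_ff (ξ : ℝ) (v : Bool) : pker ξ (false, false) v = if v = false then 1 else 0 := by
  simp [pker]

lemma pker_ft (ξ : ℝ) (v : Bool) : pker ξ (false, true) v = if v = false then ξ else 1 - ξ := by
  simp [pker]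

lemma pker_tf (ξ : ℝ) (v : Bool) : pker ξ (true, false) v = if v = false then ξ else 1 - ξ := by
  simp [pker]

lemma pker_tt (ξ : ℝ) (v : Bool) : pker ξ (true, true) v = if v = true then 1 else 0 := by
  simp [pker]

lemma hnorm_const_false {k : ℕ} : hnorm (fun _ : Fin k => false) = 0 := by
  unfold hnorm; simp

lemma hnorm_cons_of_ne {k : ℕ} (b : Bool) (v : Fin k → Bool) (h : ∃ l, v l = true) :
    hnorm (Fin.cons b v) = hnorm v + 1 := by
  obtain ⟨l, hl⟩ := h
  have hne : (Finset.univ.filter (fun m => v m = true)).Nonempty :=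
    ⟨l, by simp [hl]⟩
  obtain ⟨l₀, hl₀, hsup⟩ := Finset.exists_mem_eq_sup _ hne (fun m : Fin k => (m : ℕ) + 1)
  have hv0 : v l₀ = true := (Finset.mem_filter.1 hl₀).2
  unfold hnorm
  rw [hsup]
  apply le_antisymm
  · apply Finset.sup_le
    intro m hm
    have hm' := (Finset.mem_filter.1 hm).2
    induction m using Fin.cases with
    | zero => simp
    | succ l' =>
      have hv' : v l' = true := by simpa using hm'
      have hm2 : l' ∈ Finset.univ.filter (fun m => v m = true) := by simp [hv']
      have h3 := Finset.le_sup (f := fun m : Fin k => (m : ℕ) + 1) hm2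
      rw [hsup] at h3
      simpa using h3
  · have hmem : l₀.succ ∈
        Finset.univ.filter (fun m : Fin (k+1) => (Fin.cons b v : Fin (k+1) → Bool) m = true) := by
      simp [hv0]
    have := Finset.le_sup (f := fun m : Fin (k+1) => (m : ℕ) + 1) hmem
    simpa using this

lemma bne_cons {k : ℕ} (i' j' : Bool) (i j : Fin k → Bool) :
    (fun m => (Fin.cons i' i : Fin (k+1) → Bool) m != (Fin.cons j' j : Fin (k+1) → Bool) m) =
      Fin.cons (i' != j') (fun m => i m != j m) := by
  funext m
  induction m using Fin.cases <;> simp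

lemma hnorm_cons_true_false {k : ℕ} : hnorm (Fin.cons true (fun _ : Fin k => false)) = 1 := by
  unfold hnorm
  apply le_antisymm
  · apply Finset.sup_le
    intro m hm
    have hm' := (Finset.mem_filter.1 hm).2
    induction m using Fin.cases with
    | zero => simp
    | succ l' => simp at hm'
  · have hmem : (0 : Fin (k+1)) ∈
        Finset.univ.filter (fun m : Fin (k+1) =>
          (Fin.cons true (fun _ => false) : Fin (k+1) → Bool) m = true) := by
      simp
    have := Finset.le_sup (f := fun m : Fin (k+1) => (m : ℕ) + 1) hmem
    simpa using this

lemma hdist_self {k : ℕ} (i : Fin k → Bool) : hdist i i = 0 := by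
  unfold hdist
  simp only [bne_self_eq_false]
  exact hnorm_const_false

lemma hdist_cons {k : ℕ} (i' j' : Bool) (i j : Fin k → Bool) :
    hdist (Fin.cons i' i) (Fin.cons j' j) =
      if i = j then (if i' = j' then 0 else 1) else hdist i j + 1 := by
  unfold hdist
  rw [bne_cons]
  by_cases h : i = j
  · subst h
    simp only [bne_self_eq_false, if_pos rfl]
    by_cases h' : i' = j'
    · subst h'
      simp only [bne_self_eq_false, if_pos rfl]
      have : (Fin.cons false (fun _ => false) : Fin (k+1) → Bool) = fun _ => false := by
        funext m; induction m using Fin.cases <;> simp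
      rw [this, hnorm_const_false]
      simp
    · rw [if_neg h']
      have hb : (i' != j') = true := by
        cases i' <;> cases j' <;> simp_all
      rw [hb]
      exact hnorm_cons_true_false
  · rw [if_neg h]
    apply hnorm_cons_of_ne
    obtain ⟨l, hl⟩ := Function.ne_iff.1 h
    exact ⟨l, by simpa using hl⟩

lemma ne_of_hdist_eq {k : ℕ} {i j : Fin k → Bool} {m : ℕ} (h : hdist i j = m) (hm : 1 ≤ m) :
    i ≠ j := by
  rintro rfl
  rw [hdist_self] at h
  omega

lemma key_quadratic (δ : ℝ) (hδ : 0 < δ) (A1 : ℝ) (hA : 0 ≤ A1) :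
    2*δ*(fpaper (A1/δ))^2 - 3*δ*(fpaper (A1/δ)) - A1/2*(fpaper (A1/δ)) + δ = 0 := by
  have hr : 0 ≤ A1 / δ := div_nonneg hA hδ.le
  have hγ : (0:ℝ) ≤ ((1/4) * (3 + (A1/δ)/2))^2 - 1/2 := by nlinarith
  have hs : Real.sqrt (((1/4) * (3 + (A1/δ)/2))^2 - 1/2) ^ 2
      = ((1/4) * (3 + (A1/δ)/2))^2 - 1/2 := Real.sq_sqrt hγ
  have hδ0 : δ ≠ 0 := ne_of_gt hδ
  have hδr : δ * (A1/δ) = A1 := mul_div_cancel₀ A1 hδ0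
  have hξq : (fpaper (A1/δ))^2 - 2*((1/4) * (3 + (A1/δ)/2))*(fpaper (A1/δ)) + 1/2 = 0 := by
    unfold fpaper
    linear_combination hs
  linear_combination (2*δ)*hξq + (fpaper (A1/δ)/2) * hδr

section main
variable {n : ℕ}

lemma sum_Icc_one_succ (m : ℕ) (f : ℕ → ℝ) :
    ∑ k ∈ Finset.Icc 1 (m+1), f k = f 1 + ∑ k ∈ Finset.Icc 1 m, f (k+1) := by
  induction m with
  | zero => simp
  | succ m ih =>
    rw [Finset.sum_Icc_succ_top (by omega), ih, Finset.sum_Icc_succ_top (by omega : 1 ≤ m+1)]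
    ring

lemma sum_reindex_cons (F : (Fin (n+1) → Bool) → ℝ) :
    ∑ I : Fin (n+1) → Bool, F I = ∑ i' : Bool, ∑ i : Fin n → Bool, F (Fin.cons i' i) := by
  rw [← (Fin.consEquiv (fun _ => Bool)).sum_comp F, Fintype.sum_prod_type]
  rfl

lemma sum_flip (i : Fin n → Bool) (F : ((Fin n → Bool) → Bool) → ℝ) :
    ∑ y : (Fin n → Bool) → Bool, F (Function.update y i (! y i)) = ∑ y, F y := by
  have hinv : Function.Involutive
      (fun y : (Fin n → Bool) → Bool => Function.update y i (! y i)) := by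
    intro y
    simp
  exact Equiv.sum_comp (hinv.toPerm _) F

lemma xblock_update_ne {x : (Fin (n+1) → Bool) → Bool} {i l : Fin n → Bool} (i' : Bool)
    (c : Bool) (h : l ≠ i) :
    xblock (Function.update x (Fin.cons i' i) c) l = xblock x l := by
  unfold xblock
  rw [Function.update_of_ne (by simp [Fin.cons_inj, h]),
    Function.update_of_ne (by simp [Fin.cons_inj, h])]

lemma xblock_update_false {x : (Fin (n+1) → Bool) → Bool} {i : Fin n → Bool} (c : Bool) :
    xblock (Function.update x (Fin.cons false i) c) i = (c, x (Fin.cons true i)) := by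
  unfold xblock
  rw [Function.update_self, Function.update_of_ne (by simp [Fin.cons_inj])]

lemma xblock_update_true {x : (Fin (n+1) → Bool) → Bool} {i : Fin n → Bool} (c : Bool) :
    xblock (Function.update x (Fin.cons true i) c) i = (x (Fin.cons false i), c) := by
  unfold xblock
  rw [Function.update_self, Function.update_of_ne (by simp [Fin.cons_inj])]

lemma Pker_factor (ξ : ℝ) (x : (Fin (n+1) → Bool) → Bool) (y : (Fin n → Bool) → Bool)
    (i : Fin n → Bool) :
    Pker ξ x y = pker ξ (xblock x i) (y i) *
      ∏ l ∈ Finset.univ.erase i, pker ξ (xblock x l) (y l) := by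
  rw [Pker, ← Finset.mul_prod_erase Finset.univ _ (Finset.mem_univ i)]

lemma Pker_update_x (ξ : ℝ) (x : (Fin (n+1) → Bool) → Bool) (y : (Fin n → Bool) → Bool)
    (i' : Bool) (i : Fin n → Bool) (c : Bool) :
    Pker ξ (Function.update x (Fin.cons i' i) c) y
      = pker ξ (xblock (Function.update x (Fin.cons i' i) c) i) (y i) *
        ∏ l ∈ Finset.univ.erase i, pker ξ (xblock x l) (y l) := by
  rw [Pker, ← Finset.mul_prod_erase Finset.univ _ (Finset.mem_univ i)]
  congr 1
  apply Finset.prod_congr rfl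
  intro l hl
  rw [xblock_update_ne i' c (Finset.ne_of_mem_erase hl)]

lemma Pker_update_y (ξ : ℝ) (x : (Fin (n+1) → Bool) → Bool) (y : (Fin n → Bool) → Bool)
    (i : Fin n → Bool) (c : Bool) :
    Pker ξ x (Function.update y i c)
      = pker ξ (xblock x i) c *
        ∏ l ∈ Finset.univ.erase i, pker ξ (xblock x l) (y l) := by
  rw [Pker, ← Finset.mul_prod_erase Finset.univ _ (Finset.mem_univ i), Function.update_self]
  congr 1
  apply Finset.prod_congr rfl
  intro l hl
  rw [Function.update_of_ne (Finset.ne_of_mem_erase hl)]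

lemma prod_erase_factor (Q : (Fin n → Bool) → ℝ) {i j : Fin n → Bool} (h : j ≠ i) :
    ∏ l ∈ Finset.univ.erase i, Q l
      = Q j * ∏ l ∈ (Finset.univ.erase i).erase j, Q l := by
  rw [← Finset.mul_prod_erase _ _ (Finset.mem_erase.2 ⟨h, Finset.mem_univ j⟩)]


lemma sum_ite_const {X : Type*} [Fintype X] {c : Prop} [Decidable c] (E : X → ℝ) :
    (∑ y : X, if c then E y else 0) = if c then ∑ y : X, E y else 0 := by
  split <;> simp

lemma hdist_eq_zero {k : ℕ} {i j : Fin k → Bool} (h : hdist i j = 0) : i = j := by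
  funext m
  by_contra hm
  have hmem : m ∈ Finset.univ.filter (fun m => (i m != j m) = true) := by
    simp only [Finset.mem_filter, Finset.mem_univ, true_and, bne_iff_ne, ne_eq]
    exact hm
  have h2 := Finset.le_sup (f := fun m : Fin k => (m : ℕ) + 1) hmem
  have h3 : (Finset.univ.filter (fun m => (i m != j m) = true)).sup
      (fun m : Fin k => (m : ℕ) + 1) = 0 := h
  rw [h3] at h2
  simp at h2

lemma cov_death (ξ : ℝ) (x : (Fin (n+1) → Bool) → Bool) (g : ((Fin n → Bool) → Bool) → ℝ)
    (i : Fin n → Bool) :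
    ∑ y : (Fin n → Bool) → Bool,
        Pker ξ x y * (if y i = true then g (Function.update y i false) - g y else 0)
      = ∑ y : (Fin n → Bool) → Bool,
          ((if y i = false then Pker ξ x (Function.update y i true) else 0)
            - (if y i = true then Pker ξ x y else 0)) * g y := by
  have h1 : ∀ y : (Fin n → Bool) → Bool,
      Pker ξ x y * (if y i = true then g (Function.update y i false) - g y else 0)
      = (if y i = true then Pker ξ x y * g (Function.update y i false) else 0)
        - (if y i = true then Pker ξ x y else 0) * g y := by
    intro y; by_cases h : y i = true <;> simp [h, mul_sub]
  simp only [h1, Finset.sum_sub_distrib]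
  have h2 : ∑ y : (Fin n → Bool) → Bool,
        (if y i = true then Pker ξ x y * g (Function.update y i false) else 0)
      = ∑ y : (Fin n → Bool) → Bool,
          (if y i = false then Pker ξ x (Function.update y i true) else 0) * g y := by
    rw [← sum_flip i (fun y => if y i = true then Pker ξ x y * g (Function.update y i false) else 0)]
    apply Finset.sum_congr rfl
    intro y _
    by_cases h : y i = true
    · simp [h]
    · have hy : y i = false := by simpa using h
      have hupd : Function.update y i false = y := by
        rw [← hy]; exact Function.update_eq_self i y
      simp [hy, Function.update_idem, hupd]
  rw [h2, ← Finset.sum_sub_distrib]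
  exact Finset.sum_congr rfl fun y _ => (sub_mul _ _ _).symm

lemma cov_pair (ξ : ℝ) (x : (Fin (n+1) → Bool) → Bool) (g : ((Fin n → Bool) → Bool) → ℝ)
    (A B : ℝ) {i j : Fin n → Bool} (hij : j ≠ i) :
    ∑ y : (Fin n → Bool) → Bool,
        Pker ξ x y * (((if y i = false ∧ y j = true then A else 0)
            + (if y i = false ∧ y j = false then B else 0))
          * (g (Function.update y i true) - g y))
      = ∑ y : (Fin n → Bool) → Bool,
          ((if y i = true then Pker ξ x (Function.update y i false)
              * ((if y j = true then A else 0) + (if y j = false then B else 0)) else 0)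
            - Pker ξ x y * ((if y i = false ∧ y j = true then A else 0)
              + (if y i = false ∧ y j = false then B else 0))) * g y := by
  have h1 : ∀ y : (Fin n → Bool) → Bool,
      Pker ξ x y * (((if y i = false ∧ y j = true then A else 0)
            + (if y i = false ∧ y j = false then B else 0))
          * (g (Function.update y i true) - g y))
      = Pker ξ x y * ((if y i = false ∧ y j = true then A else 0)
            + (if y i = false ∧ y j = false then B else 0)) * g (Function.update y i true)
        - Pker ξ x y * ((if y i = false ∧ y j = true then A else 0)
            + (if y i = false ∧ y j = false then B else 0)) * g y := by
    intro y; ring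
  simp only [h1, Finset.sum_sub_distrib]
  have h2 : ∑ y : (Fin n → Bool) → Bool,
        Pker ξ x y * ((if y i = false ∧ y j = true then A else 0)
            + (if y i = false ∧ y j = false then B else 0)) * g (Function.update y i true)
      = ∑ y : (Fin n → Bool) → Bool,
          (if y i = true then Pker ξ x (Function.update y i false)
              * ((if y j = true then A else 0) + (if y j = false then B else 0)) else 0) * g y := by
    rw [← sum_flip i (fun y => Pker ξ x y * ((if y i = false ∧ y j = true then A else 0)
            + (if y i = false ∧ y j = false then B else 0)) * g (Function.update y i true))]
    apply Finset.sum_congr rfl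
    intro y _
    by_cases h : y i = true
    · have hupd : Function.update y i true = y := by
        rw [← h]; exact Function.update_eq_self i y
      simp [h, Function.update_of_ne hij, Function.update_idem, hupd]
    · have hy : y i = false := by simpa using h
      simp [hy, Function.update_idem]
  rw [h2, ← Finset.sum_sub_distrib]
  exact Finset.sum_congr rfl fun y _ => (sub_mul _ _ _).symm

end main

section pieces
variable {n : ℕ}

noncomputable def DL (ξ : ℝ) (x : (Fin (n+1) → Bool) → Bool)
    (g : ((Fin n → Bool) → Bool) → ℝ) : ℝ :=
  ∑ i' : Bool, ∑ i : Fin n → Bool, ∑ y : (Fin n → Bool) → Bool,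
    (if x (Fin.cons i' i) = true then
      (Pker ξ (Function.update x (Fin.cons i' i) false) y - Pker ξ x y) * g y else 0)

noncomputable def IL (ξ : ℝ) (x : (Fin (n+1) → Bool) → Bool)
    (g : ((Fin n → Bool) → Bool) → ℝ) (k : ℕ) : ℝ :=
  ∑ i' : Bool, ∑ i : Fin n → Bool, ∑ j' : Bool, ∑ j : Fin n → Bool,
    ∑ y : (Fin n → Bool) → Bool,
    (if hdist (Fin.cons i' i) (Fin.cons j' j) = k ∧ x (Fin.cons i' i) = false
        ∧ x (Fin.cons j' j) = true then
      (Pker ξ (Function.update x (Fin.cons i' i) true) y - Pker ξ x y) * g y else 0)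

noncomputable def DR (ξ : ℝ) (x : (Fin (n+1) → Bool) → Bool)
    (g : ((Fin n → Bool) → Bool) → ℝ) : ℝ :=
  ∑ i : Fin n → Bool, ∑ y : (Fin n → Bool) → Bool,
    ((if y i = false then Pker ξ x (Function.update y i true) else 0)
      - (if y i = true then Pker ξ x y else 0)) * g y

noncomputable def IR (ξ : ℝ) (a b : ℕ → ℕ → ℝ) (x : (Fin (n+1) → Bool) → Bool)
    (g : ((Fin n → Bool) → Bool) → ℝ) (k : ℕ) : ℝ :=
  ∑ i : Fin n → Bool, ∑ j : Fin n → Bool,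
    (if hdist i j = k then
      ∑ y : (Fin n → Bool) → Bool,
        ((if y i = true then Pker ξ x (Function.update y i false)
            * ((if y j = true then a (barN (xblock x i)) (barN (xblock x j)) else 0)
              + (if y j = false then b (barN (xblock x i)) (barN (xblock x j)) else 0)) else 0)
          - Pker ξ x y * ((if y i = false ∧ y j = true
              then a (barN (xblock x i)) (barN (xblock x j)) else 0)
            + (if y i = false ∧ y j = false
              then b (barN (xblock x i)) (barN (xblock x j)) else 0))) * g y
    else 0)

lemma L_eq (ξ : ℝ) (δ : ℝ) (α : ℕ → ℝ) (x : (Fin (n+1) → Bool) → Bool)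
    (g : ((Fin n → Bool) → Bool) → ℝ) :
    Gop δ α (fun x' => ∑ y : (Fin n → Bool) → Bool, Pker ξ x' y * g y) x
      = δ * DL ξ x g
        + ∑ k ∈ Finset.Icc 1 (n+1), α k * ((2:ℝ)^k)⁻¹ * IL ξ x g k := by
  rw [Gop]
  congr 1
  · have e1 : ∀ I : Fin (n+1) → Bool,
        (if x I = true then
          (∑ y : (Fin n → Bool) → Bool, Pker ξ (Function.update x I false) y * g y)
            - ∑ y : (Fin n → Bool) → Bool, Pker ξ x y * g y else 0)
        = ∑ y : (Fin n → Bool) → Bool,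
            (if x I = true then
              (Pker ξ (Function.update x I false) y - Pker ξ x y) * g y else 0) := by
      intro I
      rw [sum_ite_const]
      split
      · rw [← Finset.sum_sub_distrib]
        exact Finset.sum_congr rfl fun y _ => (sub_mul _ _ _).symm
      · rfl
    rw [Finset.sum_congr rfl fun I _ => e1 I]
    rw [sum_reindex_cons (fun I => ∑ y : (Fin n → Bool) → Bool,
      (if x I = true then (Pker ξ (Function.update x I false) y - Pker ξ x y) * g y else 0))]
    rfl
  · apply Finset.sum_congr rfl
    intro k _
    congr 1
    have e2 : ∀ I J : Fin (n+1) → Bool,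
        (if hdist I J = k ∧ x I = false ∧ x J = true then
          (∑ y : (Fin n → Bool) → Bool, Pker ξ (Function.update x I true) y * g y)
            - ∑ y : (Fin n → Bool) → Bool, Pker ξ x y * g y else 0)
        = ∑ y : (Fin n → Bool) → Bool,
            (if hdist I J = k ∧ x I = false ∧ x J = true then
              (Pker ξ (Function.update x I true) y - Pker ξ x y) * g y else 0) := by
      intro I J
      rw [sum_ite_const]
      split
      · rw [← Finset.sum_sub_distrib]
        exact Finset.sum_congr rfl fun y _ => (sub_mul _ _ _).symm
      · rfl
    rw [Finset.sum_congr rfl fun I _ => Finset.sum_congr rfl fun J _ => e2 I J]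
    rw [sum_reindex_cons (fun I => ∑ J : Fin (n+1) → Bool, ∑ y : (Fin n → Bool) → Bool,
      (if hdist I J = k ∧ x I = false ∧ x J = true then
        (Pker ξ (Function.update x I true) y - Pker ξ x y) * g y else 0))]
    unfold IL
    apply Finset.sum_congr rfl
    intro i' _
    apply Finset.sum_congr rfl
    intro i _
    rw [sum_reindex_cons (fun J => ∑ y : (Fin n → Bool) → Bool,
      (if hdist (Fin.cons i' i) J = k ∧ x (Fin.cons i' i) = false ∧ x J = true then
        (Pker ξ (Function.update x (Fin.cons i' i) true) y - Pker ξ x y) * g y else 0))]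

lemma R_eq (ξ : ℝ) (δ' : ℝ) (α : ℕ → ℝ) (a b : ℕ → ℕ → ℝ)
    (x : (Fin (n+1) → Bool) → Bool) (g : ((Fin n → Bool) → Bool) → ℝ) :
    ∑ y : (Fin n → Bool) → Bool, Pker ξ x y * G'op δ' α a b x g y
      = δ' * DR ξ x g
        + ∑ k ∈ Finset.Icc 1 n, α (k+1) * ((2:ℝ)^k)⁻¹ * IR ξ a b x g k := by
  have hy : ∀ y : (Fin n → Bool) → Bool,
      Pker ξ x y * G'op δ' α a b x g y
      = δ' * ∑ i : Fin n → Bool,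
          Pker ξ x y * (if y i = true then g (Function.update y i false) - g y else 0)
        + ∑ k ∈ Finset.Icc 1 n, α (k+1) * ((2:ℝ)^k)⁻¹ *
            ∑ i : Fin n → Bool, ∑ j : Fin n → Bool,
              (if hdist i j = k then
                Pker ξ x y * (((if y i = false ∧ y j = true
                    then a (barN (xblock x i)) (barN (xblock x j)) else 0)
                  + (if y i = false ∧ y j = false
                    then b (barN (xblock x i)) (barN (xblock x j)) else 0))
                  * (g (Function.update y i true) - g y)) else 0) := by
    intro y
    rw [G'op, mul_add]
    congr 1
    · rw [mul_left_comm]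
      congr 1
      rw [Finset.mul_sum]
    · rw [Finset.mul_sum]
      apply Finset.sum_congr rfl
      intro k _
      rw [mul_left_comm]
      congr 1
      rw [Finset.mul_sum]
      apply Finset.sum_congr rfl
      intro i _
      rw [Finset.mul_sum]
      apply Finset.sum_congr rfl
      intro j _
      rw [mul_ite, mul_zero]
  simp only [hy]
  rw [Finset.sum_add_distrib]
  congr 1
  · rw [← Finset.mul_sum, Finset.sum_comm]
    unfold DR
    congr 1
    apply Finset.sum_congr rfl
    intro i _
    exact cov_death ξ x g i
  · rw [Finset.sum_comm]
    apply Finset.sum_congr rfl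
    intro k hk
    rw [← Finset.mul_sum]
    congr 1
    rw [Finset.sum_comm]
    unfold IR
    apply Finset.sum_congr rfl
    intro i _
    rw [Finset.sum_comm]
    apply Finset.sum_congr rfl
    intro j _
    rw [sum_ite_const]
    by_cases hd : hdist i j = k
    · rw [if_pos hd, if_pos hd]
      have hij : j ≠ i := (ne_of_hdist_eq hd (Finset.mem_Icc.1 hk).1).symm
      exact cov_pair ξ x g _ _ hij
    · rw [if_neg hd, if_neg hd]

lemma match_death (ξ δ A1 : ℝ)
    (hK : 2*δ*ξ^2 - 3*δ*ξ - A1/2*ξ + δ = 0)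
    (x : (Fin (n+1) → Bool) → Bool) (g : ((Fin n → Bool) → Bool) → ℝ) :
    δ * DL ξ x g + A1 * ((2:ℝ)^1)⁻¹ * IL ξ x g 1 = (2 * ξ * δ) * DR ξ x g := by
  unfold DL IL DR
  have e1 : ∀ (i' : Bool) (i : Fin n → Bool) (j' : Bool) (j : Fin n → Bool),
      (∑ y : (Fin n → Bool) → Bool,
        if hdist (Fin.cons i' i) (Fin.cons j' j) = 1 ∧ x (Fin.cons i' i) = false
            ∧ x (Fin.cons j' j) = true then
          (Pker ξ (Function.update x (Fin.cons i' i) true) y - Pker ξ x y) * g y else 0)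
      = if i = j then (∑ y : (Fin n → Bool) → Bool,
          if ¬(i' = j') ∧ x (Fin.cons i' i) = false ∧ x (Fin.cons j' j) = true then
            (Pker ξ (Function.update x (Fin.cons i' i) true) y - Pker ξ x y) * g y else 0)
        else 0 := by
    intro i' i j' j
    by_cases hij : i = j
    · rw [if_pos hij]
      apply Finset.sum_congr rfl
      intro y _
      apply if_congr _ rfl rfl
      rw [hdist_cons, if_pos hij]
      by_cases hb : i' = j'
      · simp [hb]
      · simp [hb]
    · rw [if_neg hij]
      rw [sum_ite_const]
      rw [if_neg]
      rintro ⟨h1, -⟩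
      rw [hdist_cons, if_neg hij] at h1
      exact hij (hdist_eq_zero (by omega))
  simp only [e1, Finset.sum_ite_eq, Finset.mem_univ, if_true]
  simp only [Fintype.sum_bool, not_true, not_false_iff, false_and, true_and, if_false,
    if_true, Finset.sum_const_zero, add_zero, zero_add, pow_one]
  simp only [Finset.mul_sum, ← Finset.sum_add_distrib]
  apply Finset.sum_congr rfl
  intro i _
  apply Finset.sum_congr rfl
  intro y _
  rw [Pker_update_x ξ x y true i false, Pker_update_x ξ x y false i false,
    Pker_update_x ξ x y true i true, Pker_update_x ξ x y false i true,
    xblock_update_true, xblock_update_true, xblock_update_false, xblock_update_false,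
    Pker_update_y ξ x y i true]
  simp only [Pker_factor ξ x y i]
  generalize (∏ l ∈ Finset.univ.erase i, pker ξ (xblock x l) (y l)) = P
  simp only [xblock]
  rcases hu : x (Fin.cons false i) <;> rcases hv : x (Fin.cons true i) <;>
    rcases hw : y i <;>
    simp [hu, hv, hw, pker_ff, pker_ft, pker_tf, pker_tt] <;>
    [linear_combination (P * g y) * hK;
     linear_combination (-(P * g y)) * hK;
     linear_combination (P * g y) * hK;
     linear_combination (-(P * g y)) * hK;
     ring;
     ring]

lemma match_pair (ξ : ℝ) (a b : ℕ → ℕ → ℝ)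
    (ha1 : a 0 1 = 1 - ξ) (ha2 : a 0 2 = 2*(1 - ξ))
    (ha3 : a 1 1 = 1/2) (ha4 : a 1 2 = 1)
    (hb1 : b 0 0 = 0) (hb2 : b 0 1 = 1 - ξ)
    (hb3 : b 1 0 = 0) (hb4 : b 1 1 = 1/2)
    (x : (Fin (n+1) → Bool) → Bool) (g : ((Fin n → Bool) → Bool) → ℝ)
    {k : ℕ} (hk : 1 ≤ k) :
    IL ξ x g (k+1) = 2 * IR ξ a b x g k := by
  unfold IL IR
  have hcond : ∀ (i' j' : Bool) (i j : Fin n → Bool),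
      hdist (Fin.cons i' i) (Fin.cons j' j) = k+1 ↔ hdist i j = k := by
    intro i' j' i j
    constructor
    · intro h
      rw [hdist_cons] at h
      by_cases hij : i = j
      · rw [if_pos hij] at h
        split at h <;> omega
      · rw [if_neg hij] at h
        omega
    · intro h
      have hij : i ≠ j := ne_of_hdist_eq h hk
      rw [hdist_cons, if_neg hij, h]
  simp only [hcond]
  simp only [Fintype.sum_bool]
  simp only [← Finset.sum_add_distrib]
  rw [Finset.mul_sum]
  apply Finset.sum_congr rfl
  intro i _
  rw [Finset.mul_sum]
  apply Finset.sum_congr rfl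
  intro j _
  rw [mul_ite, mul_zero, Finset.mul_sum]
  rw [← sum_ite_const (fun y : (Fin n → Bool) → Bool => 2 * (_ * g y))]
  apply Finset.sum_congr rfl
  intro y _
  by_cases hd : hdist i j = k
  · have hij : i ≠ j := ne_of_hdist_eq hd hk
    have hji : j ≠ i := hij.symm
    simp only [hd, if_pos, eq_self_iff_true, true_and, if_true]
    rw [Pker_update_x ξ x y true i true, Pker_update_x ξ x y false i true,
      xblock_update_true, xblock_update_false, Pker_update_y ξ x y i false]
    simp only [Pker_factor ξ x y i]
    simp only [prod_erase_factor (fun l => pker ξ (xblock x l) (y l)) hji]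
    generalize (∏ l ∈ (Finset.univ.erase i).erase j, pker ξ (xblock x l) (y l)) = P
    simp only [xblock]
    rcases hu1 : x (Fin.cons false i) <;> rcases hu2 : x (Fin.cons true i) <;>
      rcases hw1 : x (Fin.cons false j) <;> rcases hw2 : x (Fin.cons true j) <;>
      rcases hv1 : y i <;> rcases hv2 : y j <;>
      simp [hu1, hu2, hw1, hw2, hv1, hv2, barN, pker_ff, pker_ft, pker_tf, pker_tt,
        ha1, ha2, ha3, ha4, hb1, hb2, hb3, hb4] <;>
      ring
  · simp [hd]

end pieces


/-- Intertwining of the `(δ,α₁,…,α_{n+1})`-contact process on `S_{n+1}` with the added-on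
generators `G'_x` on `S_n`: `G(Pf)(x) = ∑_{y∈S_n} P(x,y)·G'_x f(y)`, where
`ξ := f₀(α₁/δ)` and `δ' := 2ξδ`, for any choice of `a`, `b` at the unspecified
entries. -/
theorem stmt10 (n : ℕ) (δ : ℝ) (hδ : 0 < δ) (α : ℕ → ℝ)
    (hα : ∀ k, 1 ≤ k → k ≤ n+1 → 0 ≤ α k) (a b : ℕ → ℕ → ℝ)
    (ha1 : a 0 1 = 1 - fpaper (α 1 / δ)) (ha2 : a 0 2 = 2*(1 - fpaper (α 1 / δ)))
    (ha3 : a 1 1 = 1/2) (ha4 : a 1 2 = 1)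
    (hb1 : b 0 0 = 0) (hb2 : b 0 1 = 1 - fpaper (α 1 / δ))
    (hb3 : b 1 0 = 0) (hb4 : b 1 1 = 1/2)
    (g : ((Fin n → Bool) → Bool) → ℝ) (x : (Fin (n+1) → Bool) → Bool) :
    Gop δ α (fun x' => ∑ y : (Fin n → Bool) → Bool, Pker (fpaper (α 1 / δ)) x' y * g y) x
      = ∑ y : (Fin n → Bool) → Bool,
          Pker (fpaper (α 1 / δ)) x y *
            G'op (2 * fpaper (α 1 / δ) * δ) α a b x g y := by
  have hδ0 : δ ≠ 0 := ne_of_gt hδ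
  have hA1 : 0 ≤ α 1 := hα 1 le_rfl (by omega)
  set ξ := fpaper (α 1 / δ) with hxi
  have hK : 2*δ*ξ^2 - 3*δ*ξ - (α 1)/2*ξ + δ = 0 := key_quadratic δ hδ (α 1) hA1
  rw [L_eq ξ δ α x g, R_eq ξ (2*ξ*δ) α a b x g,
    sum_Icc_one_succ n (fun k => α k * ((2:ℝ)^k)⁻¹ * IL ξ x g k)]
  have hsum : ∀ k ∈ Finset.Icc 1 n,
      α (k+1) * ((2:ℝ)^(k+1))⁻¹ * IL ξ x g (k+1)
        = α (k+1) * ((2:ℝ)^k)⁻¹ * IR ξ a b x g k := by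
    intro k hk
    have h1k : 1 ≤ k := (Finset.mem_Icc.1 hk).1
    rw [match_pair ξ a b ha1 ha2 ha3 ha4 hb1 hb2 hb3 hb4 x g h1k]
    have h2 : ((2:ℝ)^(k+1))⁻¹ * 2 = ((2:ℝ)^k)⁻¹ := by
      rw [pow_succ]
      field_simp
    rw [mul_assoc, mul_assoc]
    congr 1
    rw [← mul_assoc, h2]
  rw [Finset.sum_congr rfl hsum]
  have := match_death (n := n) ξ δ (α 1) hK x g
  linarith [this]
end

section
/- For every f : S×S' → ℝ and every x ∈ S one has G(P̄f)(x) = P̄(Ĝf)(x), i.e., ∑_{x'∈S} G(x,x')·(∑_{y∈S'} P(x',y)f(x',y)) = ∑_{y∈S'} P(x,y)·Ĝf(x,y). In particular, this holds for any choice of the values t_y(x,x') at pairs with P(x,y)=0 and of the probability distributions q_y(x,·) at pairs with ∑_{x''} r(x,x'')P(x'',y) = 0. -/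
open Finset

/-- Rogers–Pitman type intertwining (Proposition on Markov processes with added
structure): given rates `r` on `S`, rates `r'_x` on `S'`, generator matrices `G`, `G'_x`,
a probability kernel `P` from `S` to `S'` satisfying the intertwining relation
`∑_{x'} G(x,x')P(x',y) = ∑_{y'} P(x,y')G'_x(y',y)`, and any admissible choices of the
rates `t_y(x,x')` and probability distributions `q_y(x,·)`, one has
`G(P̄f)(x) = P̄(Ĝf)(x)` for every `f : S×S' → ℝ` and `x ∈ S`. -/
theorem stmt11 {S S' : Type*} [Fintype S] [Fintype S'] [DecidableEq S] [DecidableEq S']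
    [Nonempty S] [Nonempty S']
    (r : S → S → ℝ) (hr : ∀ x x', 0 ≤ r x x') (hrdiag : ∀ x, r x x = 0)
    (r' : S → S' → S' → ℝ) (hr' : ∀ x y y', 0 ≤ r' x y y') (hr'diag : ∀ x y, r' x y y = 0)
    (G : S → S → ℝ)
    (hGoff : ∀ x x', x ≠ x' → G x x' = r x x')
    (hGdiag : ∀ x, G x x = -∑ x' ∈ univ.filter (fun x' => x' ≠ x), r x x')
    (G' : S → S' → S' → ℝ)
    (hG'off : ∀ x y y', y ≠ y' → G' x y y' = r' x y y')
    (hG'diag : ∀ x y, G' x y y = -∑ y' ∈ univ.filter (fun y' => y' ≠ y), r' x y y')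
    (P : S → S' → ℝ) (hP0 : ∀ x y, 0 ≤ P x y) (hP1 : ∀ x, ∑ y : S', P x y = 1)
    (hint : ∀ x y, ∑ x' : S, G x x' * P x' y = ∑ y' : S', P x y' * G' x y' y)
    (t : S' → S → S → ℝ)
    (ht : ∀ y x x', x ≠ x' → 0 < P x y → t y x x' = r x x' * P x' y / P x y)
    (q : S' → S → S → ℝ) (hq0 : ∀ y x x', 0 ≤ q y x x') (hq1 : ∀ y x, ∑ x' : S, q y x x' = 1)
    (hq : ∀ y x x', 0 < ∑ x'' : S, r x x'' * P x'' y →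
      q y x x' = r x x' * P x' y / ∑ x'' : S, r x x'' * P x'' y)
    (f : S → S' → ℝ) (x : S) :
    ∑ x' : S, G x x' * (∑ y : S', P x' y * f x' y)
      = ∑ y : S', P x y *
          ((∑ x' ∈ univ.filter (fun x' => x' ≠ x), t y x x' * (f x' y - f x y))
           + (∑ y' ∈ univ.filter (fun y' => 0 < P x y'), r' x y y' * (f x y' - f x y))
           + (∑ y' ∈ univ.filter (fun y' => P x y' = 0),
                r' x y y' * ∑ x' : S, q y' x x' * (f x' y' - f x y))) := by

  classical
  set pos : Finset S' := univ.filter (fun y => 0 < P x y) with hposdef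
  set zer : Finset S' := univ.filter (fun y => P x y = 0) with hzerdef
  have hzer_eq : zer = univ.filter (fun y => ¬ 0 < P x y) := by
    rw [hzerdef]
    apply Finset.filter_congr
    intro y _
    constructor
    · intro h; simp [h]
    · intro h; exact le_antisymm (not_lt.mp h) (hP0 x y)
  have hsplit : ∀ g : S' → ℝ, ∑ y ∈ pos, g y + ∑ y ∈ zer, g y = ∑ y : S', g y := by
    intro g; rw [hzer_eq, hposdef]; exact Finset.sum_filter_add_sum_filter_not _ _ _
  have hsplitx : ∀ g : S → ℝ,
      ∑ x' ∈ univ.filter (fun x' => x' ≠ x), g x' + g x = ∑ x' : S, g x' := by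
    intro g; rw [Finset.filter_ne']; exact Finset.sum_erase_add _ _ (mem_univ x)
  have hsplity : ∀ (y : S') (g : S' → ℝ),
      ∑ y' ∈ univ.filter (fun y' => y' ≠ y), g y' + g y = ∑ y' : S', g y' := by
    intro y g; rw [Finset.filter_ne']; exact Finset.sum_erase_add _ _ (mem_univ y)
  set R : ℝ := ∑ x' ∈ univ.filter (fun x' => x' ≠ x), r x x' with hRdef
  set c : S' → ℝ := fun y => ∑ x' : S, r x x' * P x' y with hcdef
  set R' : S' → ℝ := fun y => ∑ y' ∈ univ.filter (fun y' => y' ≠ y), r' x y y' with hR'def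
  -- generator acting on a function of x'
  have hG : ∀ h : S → ℝ, ∑ x' : S, G x x' * h x' = (∑ x' : S, r x x' * h x') - R * h x := by
    intro h
    have h1 := hsplitx (fun x' => G x x' * h x')
    have h2 := hsplitx (fun x' => r x x' * h x')
    have h3 : ∑ x' ∈ univ.filter (fun x' => x' ≠ x), G x x' * h x'
        = ∑ x' ∈ univ.filter (fun x' => x' ≠ x), r x x' * h x' := by
      apply Finset.sum_congr rfl
      intro x' hx'
      rw [hGoff x x' (Ne.symm (Finset.mem_filter.mp hx').2)]
    rw [← h1, h3, hGdiag x, ← hRdef, hrdiag x] at *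
    simp only [hrdiag x, zero_mul, add_zero] at h2
    rw [h2]; ring
  -- key consequence of intertwining
  have hd : ∀ y' : S', ∑ y : S', P x y * r' x y y'
      = c y' - R * P x y' + P x y' * R' y' := by
    intro y'
    have h1 := hint x y'
    rw [hG (fun x' => P x' y')] at h1
    have h2 := hsplity y' (fun y => P x y * G' x y y')
    have h3 : ∑ y ∈ univ.filter (fun y => y ≠ y'), P x y * G' x y y'
        = ∑ y ∈ univ.filter (fun y => y ≠ y'), P x y * r' x y y' := by
      apply Finset.sum_congr rfl
      intro y hy
      rw [hG'off x y y' (Finset.mem_filter.mp hy).2]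
    have h4 := hsplity y' (fun y => P x y * r' x y y')
    rw [h3, hG'diag x y'] at h2
    rw [hr'diag x y', mul_zero] at h4
    rw [← h2] at h1
    simp only [hcdef, hR'def]
    linarith
  -- the t-part, per y ∈ pos
  have hA : ∀ y ∈ pos, P x y * (∑ x' ∈ univ.filter (fun x' => x' ≠ x), t y x x' * (f x' y - f x y))
      = (∑ x' : S, r x x' * P x' y * f x' y) - c y * f x y := by
    intro y hy
    have hPy : 0 < P x y := (Finset.mem_filter.mp hy).2
    have hPy' : P x y ≠ 0 := ne_of_gt hPy
    rw [Finset.mul_sum]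
    have h1 : ∀ x' ∈ univ.filter (fun x' => x' ≠ x),
        P x y * (t y x x' * (f x' y - f x y)) = r x x' * P x' y * (f x' y - f x y) := by
      intro x' hx'
      rw [ht y x x' (Ne.symm (Finset.mem_filter.mp hx').2) hPy]
      field_simp
    rw [Finset.sum_congr rfl h1]
    have h2 := hsplitx (fun x' => r x x' * P x' y * (f x' y - f x y))
    rw [hrdiag x] at h2
    simp only [zero_mul, add_zero] at h2
    rw [h2]
    rw [show (∑ x' : S, r x x' * P x' y * (f x' y - f x y))
        = (∑ x' : S, (r x x' * P x' y * f x' y - r x x' * P x' y * f x y)) by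
      apply Finset.sum_congr rfl; intro x' _; ring]
    rw [Finset.sum_sub_distrib, ← Finset.sum_mul]
  -- sums over pos of P x y * r' x y y' equal full sums
  have hfull : ∀ y' : S', ∑ y ∈ pos, P x y * r' x y y' = ∑ y : S', P x y * r' x y y' := by
    intro y'
    rw [← hsplit (fun y => P x y * r' x y y')]
    have : ∑ y ∈ zer, P x y * r' x y y' = 0 := by
      apply Finset.sum_eq_zero
      intro y hy
      rw [(Finset.mem_filter.mp hy).2]; ring
    rw [this, add_zero]
  -- the r'-part (B)
  have hB : ∑ y ∈ pos, P x y * (∑ y' ∈ pos, r' x y y' * (f x y' - f x y))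
      = ∑ y ∈ pos, (c y - R * P x y + P x y * R' y) * f x y
        - ∑ y ∈ pos, P x y * (∑ y' ∈ pos, r' x y y') * f x y := by
    have h1 : ∀ y ∈ pos, P x y * (∑ y' ∈ pos, r' x y y' * (f x y' - f x y))
        = (∑ y' ∈ pos, P x y * r' x y y' * f x y') - P x y * (∑ y' ∈ pos, r' x y y') * f x y := by
      intro y _
      rw [Finset.mul_sum]
      rw [show (∑ y' ∈ pos, P x y * (r' x y y' * (f x y' - f x y)))
          = ∑ y' ∈ pos, (P x y * r' x y y' * f x y' - P x y * r' x y y' * f x y) from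
        Finset.sum_congr rfl (fun y' _ => by ring)]
      rw [Finset.sum_sub_distrib, ← Finset.sum_mul, ← Finset.mul_sum]
    rw [Finset.sum_congr rfl h1, Finset.sum_sub_distrib]
    apply congrArg (· - _)
    rw [Finset.sum_comm]
    apply Finset.sum_congr rfl
    intro y' _
    rw [← Finset.sum_mul, hfull y', hd y']
  -- the q-part (C)
  have hcQ : ∀ y' ∈ zer, (∑ y : S', P x y * r' x y y') * (∑ x' : S, q y' x x' * f x' y')
      = ∑ x' : S, r x x' * P x' y' * f x' y' := by
    intro y' hy'
    have hPz : P x y' = 0 := (Finset.mem_filter.mp hy').2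
    have hcval : ∑ y : S', P x y * r' x y y' = ∑ x'' : S, r x x'' * P x'' y' := by
      have h5 := hd y'
      simp only [hcdef] at h5
      rw [h5, hPz]; ring
    rw [hcval]
    have hcnn : (0:ℝ) ≤ ∑ x'' : S, r x x'' * P x'' y' :=
      Finset.sum_nonneg (fun x' _ => mul_nonneg (hr x x') (hP0 x' y'))
    rcases lt_or_eq_of_le hcnn with hcpos | hczero
    · have hcne : (∑ x'' : S, r x x'' * P x'' y') ≠ 0 := ne_of_gt hcpos
      have h1 : ∀ x' ∈ (univ : Finset S), q y' x x' * f x' y'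
          = r x x' * P x' y' * f x' y' / (∑ x'' : S, r x x'' * P x'' y') := by
        intro x' _
        rw [hq y' x x' hcpos]
        ring
      rw [Finset.sum_congr rfl h1, ← Finset.sum_div, mul_comm, div_mul_cancel₀ _ hcne]
    · have hterm : ∀ x' ∈ (univ : Finset S), r x x' * P x' y' = 0 :=
        (Finset.sum_eq_zero_iff_of_nonneg
          (fun x'' _ => mul_nonneg (hr x x'') (hP0 x'' y'))).mp hczero.symm
      have h2 : ∑ x' : S, r x x' * P x' y' * f x' y' = 0 :=
        Finset.sum_eq_zero (fun x' hx' => by rw [hterm x' hx', zero_mul])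
      rw [h2, ← hczero, zero_mul]
  have hC : ∑ y ∈ pos, P x y * (∑ y' ∈ zer, r' x y y' * ∑ x' : S, q y' x x' * (f x' y' - f x y))
      = ∑ y' ∈ zer, (∑ x' : S, r x x' * P x' y' * f x' y')
        - ∑ y ∈ pos, P x y * (∑ y' ∈ zer, r' x y y') * f x y := by
    have h1 : ∀ y ∈ pos, P x y * (∑ y' ∈ zer, r' x y y' * ∑ x' : S, q y' x x' * (f x' y' - f x y))
        = (∑ y' ∈ zer, P x y * r' x y y' * (∑ x' : S, q y' x x' * f x' y'))
          - P x y * (∑ y' ∈ zer, r' x y y') * f x y := by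
      intro y _
      have hinner : ∀ y' ∈ zer, r' x y y' * ∑ x' : S, q y' x x' * (f x' y' - f x y)
          = r' x y y' * (∑ x' : S, q y' x x' * f x' y') - r' x y y' * f x y := by
        intro y' _
        rw [show (∑ x' : S, q y' x x' * (f x' y' - f x y))
            = (∑ x' : S, (q y' x x' * f x' y' - q y' x x' * f x y)) by
          apply Finset.sum_congr rfl; intro x' _; ring,
          Finset.sum_sub_distrib, ← Finset.sum_mul, hq1 y' x, one_mul]
        ring
      rw [Finset.sum_congr rfl hinner, Finset.mul_sum]
      rw [show (∑ y' ∈ zer, P x y * (r' x y y' * (∑ x' : S, q y' x x' * f x' y')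
              - r' x y y' * f x y))
          = ∑ y' ∈ zer, (P x y * r' x y y' * (∑ x' : S, q y' x x' * f x' y')
              - P x y * r' x y y' * f x y) from
        Finset.sum_congr rfl (fun y' _ => by ring)]
      rw [Finset.sum_sub_distrib, ← Finset.sum_mul, ← Finset.mul_sum]
    rw [Finset.sum_congr rfl h1, Finset.sum_sub_distrib]
    apply congrArg (· - _)
    rw [Finset.sum_comm]
    apply Finset.sum_congr rfl
    intro y' hy'
    rw [show (∑ y ∈ pos, P x y * r' x y y' * (∑ x' : S, q y' x x' * f x' y'))
      = (∑ y ∈ pos, P x y * r' x y y') * (∑ x' : S, q y' x x' * f x' y') by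
        rw [Finset.sum_mul]]
    rw [hfull y', hcQ y' hy']
  -- assemble the right-hand side
  have hRHSsplit : (∑ y : S', P x y *
          ((∑ x' ∈ univ.filter (fun x' => x' ≠ x), t y x x' * (f x' y - f x y))
           + (∑ y' ∈ pos, r' x y y' * (f x y' - f x y))
           + (∑ y' ∈ zer, r' x y y' * ∑ x' : S, q y' x x' * (f x' y' - f x y))))
      = (∑ y ∈ pos, P x y * (∑ x' ∈ univ.filter (fun x' => x' ≠ x), t y x x' * (f x' y - f x y)))
        + (∑ y ∈ pos, P x y * (∑ y' ∈ pos, r' x y y' * (f x y' - f x y)))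
        + (∑ y ∈ pos, P x y * (∑ y' ∈ zer, r' x y y' * ∑ x' : S, q y' x x' * (f x' y' - f x y))) := by
    rw [← hsplit]
    have hz : ∑ y ∈ zer, P x y *
          ((∑ x' ∈ univ.filter (fun x' => x' ≠ x), t y x x' * (f x' y - f x y))
           + (∑ y' ∈ pos, r' x y y' * (f x y' - f x y))
           + (∑ y' ∈ zer, r' x y y' * ∑ x' : S, q y' x x' * (f x' y' - f x y))) = 0 := by
      apply Finset.sum_eq_zero
      intro y hy
      rw [(Finset.mem_filter.mp hy).2]; ring
    rw [hz, add_zero]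
    rw [← Finset.sum_add_distrib, ← Finset.sum_add_distrib]
    apply Finset.sum_congr rfl
    intro y _; ring
  rw [hG (fun x' => ∑ y : S', P x' y * f x' y)]
  rw [hRHSsplit, Finset.sum_congr rfl hA, hB, hC]
  -- combine the leftover terms
  have hcoef : ∀ y ∈ pos,
      -(c y * f x y) + ((c y - R * P x y + P x y * R' y) * f x y
        - P x y * (∑ y' ∈ pos, r' x y y') * f x y)
        - P x y * (∑ y' ∈ zer, r' x y y') * f x y
      = -(R * (P x y * f x y)) := by
    intro y _
    have hS : (∑ y' ∈ pos, r' x y y') + (∑ y' ∈ zer, r' x y y') = R' y := by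
      rw [hsplit (fun y' => r' x y y')]
      have h5 := hsplity y (fun y' => r' x y y')
      rw [hr'diag x y] at h5
      simp only [hR'def]
      linarith
    linear_combination (-(f x y * P x y)) * hS
  -- final arithmetic
  have hE : (∑ y ∈ pos, (∑ x' : S, r x x' * P x' y * f x' y))
      + (∑ y' ∈ zer, (∑ x' : S, r x x' * P x' y' * f x' y'))
      = ∑ x' : S, r x x' * (∑ y : S', P x' y * f x' y) := by
    rw [hsplit (fun y => ∑ x' : S, r x x' * P x' y * f x' y)]
    rw [Finset.sum_comm]
    apply Finset.sum_congr rfl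
    intro x' _
    rw [Finset.mul_sum]
    apply Finset.sum_congr rfl
    intro y _; ring
  have hF : ∑ y ∈ pos, P x y * f x y = ∑ y : S', P x y * f x y := by
    rw [← hsplit (fun y => P x y * f x y)]
    have : ∑ y ∈ zer, P x y * f x y = 0 := by
      apply Finset.sum_eq_zero
      intro y hy; rw [(Finset.mem_filter.mp hy).2]; ring
    rw [this, add_zero]
  have hcomb : ∑ y ∈ pos, (-(c y * f x y)
        + ((c y - R * P x y + P x y * R' y) * f x y
          - P x y * (∑ y' ∈ pos, r' x y y') * f x y)
        - P x y * (∑ y' ∈ zer, r' x y y') * f x y)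
      = - (R * ∑ y : S', P x y * f x y) := by
    rw [Finset.sum_congr rfl hcoef, Finset.sum_neg_distrib, ← Finset.mul_sum, hF]
  symm
  calc (∑ y ∈ pos, ((∑ x' : S, r x x' * P x' y * f x' y) - c y * f x y))
        + ((∑ y ∈ pos, (c y - R * P x y + P x y * R' y) * f x y)
          - ∑ y ∈ pos, P x y * (∑ y' ∈ pos, r' x y y') * f x y)
        + ((∑ y' ∈ zer, (∑ x' : S, r x x' * P x' y' * f x' y'))
          - ∑ y ∈ pos, P x y * (∑ y' ∈ zer, r' x y y') * f x y)
      = ((∑ y ∈ pos, (∑ x' : S, r x x' * P x' y * f x' y))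
          + (∑ y' ∈ zer, (∑ x' : S, r x x' * P x' y' * f x' y')))
        + ∑ y ∈ pos, (-(c y * f x y)
          + ((c y - R * P x y + P x y * R' y) * f x y
            - P x y * (∑ y' ∈ pos, r' x y y') * f x y)
          - P x y * (∑ y' ∈ zer, r' x y y') * f x y) := by
        simp only [Finset.sum_add_distrib, Finset.sum_sub_distrib, Finset.sum_neg_distrib]
        ring
    _ = (∑ x' : S, r x x' * (∑ y : S', P x' y * f x' y)) - R * ∑ y : S', P x y * f x y := by
        rw [hE, hcomb]; ring
end

section
/- The function δ ↦ Π(δ) := ∏_{k=0}^∞ (1 − ξ_δ(k)) is nonincreasing on (0,∞). -/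
/-- `α_k(n)`: `α_k(0) := α_k` and `α_k(n+1) := (1/2)·α_{k+1}(n)`. -/
noncomputable def alphaSeq (α : ℕ → ℝ) : ℕ → ℕ → ℝ
  | 0 => α
  | n+1 => fun k => (1/2) * alphaSeq α n (k+1)

/-- `δ(n)`: `δ(0) := δ` and `δ(n+1) := 2ξ_δ(n)δ(n)` where `ξ_δ(n) := f(α₁(n)/δ(n))`. -/
noncomputable def deltaSeq (α : ℕ → ℝ) (δ : ℝ) : ℕ → ℝ
  | 0 => δ
  | n+1 => 2 * fpaper (alphaSeq α n 1 / deltaSeq α δ n) * deltaSeq α δ n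

/-- `ξ_δ(n) := f(α₁(n)/δ(n))`. -/
noncomputable def xiSeq (α : ℕ → ℝ) (δ : ℝ) (n : ℕ) : ℝ :=
  fpaper (alphaSeq α n 1 / deltaSeq α δ n)

/-- The infinite product `Π(δ) := ∏_{k=0}^∞ (1 − ξ_δ(k))`, realized as the infimum of
the partial products (which equals their limit, since all factors lie in `[1/2,1)`). -/
noncomputable def PiProd (α : ℕ → ℝ) (δ : ℝ) : ℝ :=
  ⨅ n : ℕ, ∏ k ∈ Finset.range n, (1 - xiSeq α δ k)

section Aux

private lemma sqrt_aux (r : ℝ) (hr : 0 ≤ r) :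
    (1:ℝ)/4 ≤ Real.sqrt (((1/4) * (3 + r/2))^2 - 1/2) ∧
    Real.sqrt (((1/4) * (3 + r/2))^2 - 1/2) < (1/4) * (3 + r/2) := by
  have harg : (0:ℝ) ≤ ((1/4) * (3 + r/2))^2 - 1/2 := by nlinarith
  have hsq := Real.sq_sqrt harg
  have hnn := Real.sqrt_nonneg (((1/4) * (3 + r/2))^2 - 1/2)
  constructor
  · nlinarith
  · nlinarith

lemma fpaper_pos (r : ℝ) (hr : 0 ≤ r) : 0 < fpaper r := by
  have := (sqrt_aux r hr).2
  unfold fpaper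
  linarith

lemma fpaper_le_half (r : ℝ) (hr : 0 ≤ r) : fpaper r ≤ 1/2 := by
  have harg : (0:ℝ) ≤ ((1/4) * (3 + r/2))^2 - 1/2 := by nlinarith
  have hsq := Real.sq_sqrt harg
  have hnn := Real.sqrt_nonneg (((1/4) * (3 + r/2))^2 - 1/2)
  have h1 := (sqrt_aux r hr).1
  unfold fpaper
  nlinarith

lemma fpaper_anti {r s : ℝ} (hr : 0 ≤ r) (hrs : r ≤ s) : fpaper s ≤ fpaper r := by
  have hs : 0 ≤ s := hr.trans hrs
  have h1 := sqrt_aux r hr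
  have h2 := sqrt_aux s hs
  have harg1 : (0:ℝ) ≤ ((1/4) * (3 + r/2))^2 - 1/2 := by nlinarith
  have harg2 : (0:ℝ) ≤ ((1/4) * (3 + s/2))^2 - 1/2 := by nlinarith
  have hsq1 := Real.sq_sqrt harg1
  have hsq2 := Real.sq_sqrt harg2
  unfold fpaper
  nlinarith [h1.1, h2.1, h1.2, h2.2]

lemma alphaSeq_nonneg (α : ℕ → ℝ) (hα : ∀ k, 1 ≤ k → 0 ≤ α k) :
    ∀ n k, 1 ≤ k → 0 ≤ alphaSeq α n k := by
  intro n
  induction n with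
  | zero => exact hα
  | succ m ih =>
    intro k hk
    have := ih (k+1) (by omega)
    simp only [alphaSeq]
    linarith

lemma deltaSeq_pos (α : ℕ → ℝ) (hα : ∀ k, 1 ≤ k → 0 ≤ α k) {δ : ℝ} (hδ : 0 < δ) :
    ∀ n, 0 < deltaSeq α δ n := by
  intro n
  induction n with
  | zero => exact hδ
  | succ m ih =>
    have ha : 0 ≤ alphaSeq α m 1 := alphaSeq_nonneg α hα m 1 le_rfl
    have hr : 0 ≤ alphaSeq α m 1 / deltaSeq α δ m := div_nonneg ha ih.le
    have := fpaper_pos _ hr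
    simp only [deltaSeq]
    positivity

lemma deltaSeq_mono (α : ℕ → ℝ) (hα : ∀ k, 1 ≤ k → 0 ≤ α k) {δ₁ δ₂ : ℝ}
    (h1 : 0 < δ₁) (h12 : δ₁ ≤ δ₂) :
    ∀ n, deltaSeq α δ₁ n ≤ deltaSeq α δ₂ n := by
  intro n
  induction n with
  | zero => exact h12
  | succ m ih =>
    have h2 : 0 < δ₂ := h1.trans_le h12
    have hd1 := deltaSeq_pos α hα h1 m
    have hd2 := deltaSeq_pos α hα h2 m
    have ha : 0 ≤ alphaSeq α m 1 := alphaSeq_nonneg α hα m 1 le_rfl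
    have hr2 : 0 ≤ alphaSeq α m 1 / deltaSeq α δ₂ m := div_nonneg ha hd2.le
    have hrle : alphaSeq α m 1 / deltaSeq α δ₂ m ≤ alphaSeq α m 1 / deltaSeq α δ₁ m :=
      div_le_div_of_nonneg_left ha hd1 ih
    have hf : fpaper (alphaSeq α m 1 / deltaSeq α δ₁ m)
        ≤ fpaper (alphaSeq α m 1 / deltaSeq α δ₂ m) := fpaper_anti hr2 hrle
    have hfpos := fpaper_pos _ hr2
    simp only [deltaSeq]
    have : fpaper (alphaSeq α m 1 / deltaSeq α δ₁ m) * deltaSeq α δ₁ m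
        ≤ fpaper (alphaSeq α m 1 / deltaSeq α δ₂ m) * deltaSeq α δ₂ m := by
      apply mul_le_mul hf ih hd1.le hfpos.le
    linarith

lemma xiSeq_mono (α : ℕ → ℝ) (hα : ∀ k, 1 ≤ k → 0 ≤ α k) {δ₁ δ₂ : ℝ}
    (h1 : 0 < δ₁) (h12 : δ₁ ≤ δ₂) (n : ℕ) :
    xiSeq α δ₁ n ≤ xiSeq α δ₂ n := by
  have h2 : 0 < δ₂ := h1.trans_le h12
  have hd1 := deltaSeq_pos α hα h1 n
  have hd2 := deltaSeq_pos α hα h2 n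
  have ha : 0 ≤ alphaSeq α n 1 := alphaSeq_nonneg α hα n 1 le_rfl
  have hr2 : 0 ≤ alphaSeq α n 1 / deltaSeq α δ₂ n := div_nonneg ha hd2.le
  have hrle : alphaSeq α n 1 / deltaSeq α δ₂ n ≤ alphaSeq α n 1 / deltaSeq α δ₁ n :=
    div_le_div_of_nonneg_left ha hd1 (deltaSeq_mono α hα h1 h12 n)
  exact fpaper_anti hr2 hrle

lemma xiSeq_le_half (α : ℕ → ℝ) (hα : ∀ k, 1 ≤ k → 0 ≤ α k) {δ : ℝ} (hδ : 0 < δ) (n : ℕ) :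
    xiSeq α δ n ≤ 1/2 := by
  have hd := deltaSeq_pos α hα hδ n
  have ha : 0 ≤ alphaSeq α n 1 := alphaSeq_nonneg α hα n 1 le_rfl
  exact fpaper_le_half _ (div_nonneg ha hd.le)

end Aux

/-- The function `δ ↦ Π(δ)` is nonincreasing on `(0,∞)`. -/
theorem stmt13 (α : ℕ → ℝ) (hα : ∀ k, 1 ≤ k → 0 ≤ α k) :
    AntitoneOn (fun δ => PiProd α δ) (Set.Ioi 0) := by
  intro δ₁ h1 δ₂ h2 h12
  simp only [Set.mem_Ioi] at h1 h2
  unfold PiProd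
  have hbdd : BddBelow (Set.range fun n => ∏ k ∈ Finset.range n, (1 - xiSeq α δ₂ k)) := by
    refine ⟨0, ?_⟩
    rintro x ⟨n, rfl⟩
    apply Finset.prod_nonneg
    intro k _
    have := xiSeq_le_half α hα h2 k
    linarith
  apply ciInf_mono hbdd
  intro n
  apply Finset.prod_le_prod
  · intro k _
    have := xiSeq_le_half α hα h2 k
    linarith
  · intro k _
    have := xiSeq_mono α hα h1 h12 k
    linarith
end

section
/- If ∑_{i=1}^∞ (N')^{−i}·|log(γ_i)| < ∞, then ∑_{k=1}^∞ 2^{−k}·|log(γ''_k)| < ∞. -/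
/-- Comparison of summability: if `(γ_i)` are positive, `N' > 1`, `m, n ≥ 1` with
`(N')^m ≤ 2^n`, `i_l` is a minimizing index of `γ` in `{lm+1,…,lm+m}`, and
`γ''_{ln+r} := γ_{i_l}` for `r = 1,…,n`, then `∑_{i=1}^∞ (N')^{−i}|log γ_i| < ∞`
implies `∑_{k=1}^∞ 2^{−k}|log γ''_k| < ∞`. -/
theorem stmt18 (γ : ℕ → ℝ) (hγ : ∀ i, 1 ≤ i → 0 < γ i)
    (N' : ℝ) (hN' : 1 < N') (m n : ℕ) (hm : 1 ≤ m) (hn : 1 ≤ n)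
    (hmn : (N')^m ≤ (2:ℝ)^n)
    (isel : ℕ → ℕ)
    (hsel_mem : ∀ l, l*m + 1 ≤ isel l ∧ isel l ≤ l*m + m)
    (hsel_min : ∀ l j, l*m + 1 ≤ j → j ≤ l*m + m → γ (isel l) ≤ γ j)
    (γ'' : ℕ → ℝ) (hγ'' : ∀ l r, 1 ≤ r → r ≤ n → γ'' (l*n + r) = γ (isel l))
    (hsum : Summable (fun i : ℕ => ((N')⁻¹)^(i+1) * |Real.log (γ (i+1))|)) :
    Summable (fun k : ℕ => (1/2:ℝ)^(k+1) * |Real.log (γ'' (k+1))|) := by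
  have hN0 : (0:ℝ) < N' := lt_trans one_pos hN'
  have hNi0 : (0:ℝ) < (N')⁻¹ := inv_pos.mpr hN0
  have hNi1 : (N')⁻¹ ≤ 1 := by
    rw [inv_le_one_iff₀]; right; exact le_of_lt hN'
  set g : ℕ → ℝ := fun l => ((N')⁻¹)^(isel l) * |Real.log (γ (isel l))| with hg
  have hg0 : ∀ l, 0 ≤ g l := fun l =>
    mul_nonneg (pow_nonneg (le_of_lt hNi0) _) (abs_nonneg _)
  -- summability of g via injectivity of isel
  have hinj : Function.Injective (fun l => isel l - 1) := by
    have hmono : StrictMono isel := by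
      intro a b hab
      calc isel a ≤ a*m+m := (hsel_mem a).2
        _ ≤ b*m := by nlinarith [hab]
        _ < b*m+1 := by omega
        _ ≤ isel b := (hsel_mem b).1
    intro a b hab
    apply hmono.injective
    have ha := (hsel_mem a).1
    have hb := (hsel_mem b).1
    simp only at hab
    omega
  have hgsum : Summable g := by
    have : g = (fun i : ℕ => ((N')⁻¹)^(i+1) * |Real.log (γ (i+1))|) ∘
        (fun l => isel l - 1) := by
      funext l
      have h1 : 1 ≤ isel l := le_trans (Nat.le_add_left 1 (l*m)) (hsel_mem l).1
      simp only [hg, Function.comp]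
      rw [Nat.sub_add_cancel h1]
    rw [this]
    exact hsum.comp_injective hinj
  -- summability of k ↦ g (k / n)
  have hn0 : NeZero n := ⟨by omega⟩
  have hgdiv : Summable (fun k : ℕ => g (k / n)) := by
    have hprod : Summable (fun p : ℕ × Fin n => g p.1) := by
      apply (summable_prod_of_nonneg (fun p => hg0 p.1)).mpr
      constructor
      · intro x; exact summable_of_finite_support (Set.Finite.subset (Set.finite_univ) (by simp))
      · simpa [tsum_fintype] using hgsum.mul_left (n : ℝ)
    have := (Equiv.summable_iff (Nat.divModEquiv n)).mpr hprod
    simpa [Function.comp_def, Nat.divModEquiv] using this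
  -- termwise bound
  refine Summable.of_nonneg_of_le (f := fun k => (N')^m * g (k / n))
    (fun k => mul_nonneg (pow_nonneg (by norm_num) _) (abs_nonneg _))
    ?_ (hgdiv.mul_left _)
  intro k
  have hnpos : 0 < n := by omega
  have hmod : k % n + 1 ≤ n := Nat.succ_le_of_lt (Nat.mod_lt k hnpos)
  have hγeq : γ'' (k+1) = γ (isel (k/n)) := by
    have hk : k + 1 = (k/n)*n + (k % n + 1) := by
      rw [← Nat.add_assoc, Nat.div_add_mod']
    rw [hk]; exact hγ'' _ _ (by omega) hmod
  simp only [hg, hγeq]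
  rw [← mul_assoc]
  refine mul_le_mul_of_nonneg_right ?_ (abs_nonneg _)
  set l := k / n with hl
  -- (1/2)^(k+1) ≤ N'^m * (N'⁻¹)^(isel l)
  have h2 : (1/2:ℝ)^(k+1) ≤ (1/2:ℝ)^(l*n) := by
    apply pow_le_pow_of_le_one (by norm_num) (by norm_num)
    calc l*n = n*(k/n) := by rw [mul_comm]
      _ ≤ k := Nat.mul_div_le k n
      _ ≤ k+1 := by omega
  have h3 : (1/2:ℝ)^(l*n) = ((1/2:ℝ)^n)^l := by
    rw [← pow_mul, mul_comm]
  have h4 : ((1/2:ℝ)^n) ≤ ((N')⁻¹)^m := by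
    rw [one_div, inv_pow, inv_pow]
    exact inv_anti₀ (pow_pos hN0 m) hmn
  have h5 : ((1/2:ℝ)^n)^l ≤ (((N')⁻¹)^m)^l :=
    pow_le_pow_left₀ (by positivity) h4 l
  have h6 : (((N')⁻¹)^m)^l = ((N')⁻¹)^(m*l) := by rw [pow_mul]
  have h7 : ((N')⁻¹)^(m*l) ≤ (N')^m * ((N')⁻¹)^(isel l) := by
    have hle : isel l ≤ l*m + m := (hsel_mem l).2
    have h8 : ((N')⁻¹)^(l*m+m) ≤ ((N')⁻¹)^(isel l) :=
      pow_le_pow_of_le_one (le_of_lt hNi0) hNi1 hle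
    calc ((N')⁻¹)^(m*l) = (N')^m * ((N')⁻¹)^(l*m+m) := by
          have hne : ((N':ℝ))^m ≠ 0 := by positivity
          rw [pow_add, mul_comm l m, inv_pow, inv_pow]
          field_simp
      _ ≤ (N')^m * ((N')⁻¹)^(isel l) :=
          mul_le_mul_of_nonneg_left h8 (by positivity)
  calc (1/2:ℝ)^(k+1) ≤ ((1/2:ℝ)^n)^l := by rw [← h3]; exact h2
    _ ≤ ((N')⁻¹)^(m*l) := by rw [← h6]; exact h5
    _ ≤ (N')^m * ((N')⁻¹)^(isel l) := h7
end
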